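/- For the minority rule, if location i is final at time t (neighborhood not 101 or 010), then its value flips every step: E_{t+s}(i) = E_t(i) XOR (s mod 2) for all s ≥ 0. -/

import Mathlib

/-- The minority rule on bits. -/
def mino (a b c : Fin 2) : Fin 2 := if a.val + b.val + c.val ≤ 1 then 1 else 0

/-- A location `i` is final at configuration `σ` if its neighborhood pattern
is not 101 nor 010. -/
def MinFinal {n : ℕ} (σ : ZMod n → Fin 2) (i : ZMod n) : Prop :=
  ¬((σ (i - 1), σ i, σ (i + 1)) = ((1 : Fin 2), (0 : Fin 2), (1 : Fin 2)) ∨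
    (σ (i - 1), σ i, σ (i + 1)) = ((0 : Fin 2), (1 : Fin 2), (0 : Fin 2)))

/-!
A bit of the minority rule always flips when it agrees with one of its neighbours,
and then that neighbour flips with it, so the two still agree after the step.
Hence a final location stays final forever and flips at every step.
-/

lemma mino_self_left (b c : Fin 2) : mino b b c = b + 1 := by
  revert b c; decide

lemma mino_self_right (a b : Fin 2) : mino a b b = b + 1 := by
  revert a b; decide

lemma minFinal_iff {n : ℕ} (σ : ZMod n → Fin 2) (i : ZMod n) :
    MinFinal σ i ↔ σ (i - 1) = σ i ∨ σ i = σ (i + 1) := by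
  unfold MinFinal
  generalize σ (i - 1) = a, σ i = b, σ (i + 1) = c
  revert a b c; decide

def minoStep {n : ℕ} (σ : ZMod n → Fin 2) (j : ZMod n) : Fin 2 :=
  mino (σ (j - 1)) (σ j) (σ (j + 1))

section MinoStep

variable {n : ℕ} {σ : ZMod n → Fin 2} {i : ZMod n}

lemma minoStep_of_eq_left (h : σ (i - 1) = σ i) : minoStep σ i = σ i + 1 := by
  rw [minoStep, h, mino_self_left]

lemma minoStep_of_eq_right (h : σ i = σ (i + 1)) : minoStep σ i = σ i + 1 := by
  rw [minoStep, ← h, mino_self_right]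

lemma MinFinal.minoStep_apply (h : MinFinal σ i) : minoStep σ i = σ i + 1 :=
  ((minFinal_iff σ i).mp h).elim minoStep_of_eq_left minoStep_of_eq_right

lemma MinFinal.minoStep (h : MinFinal σ i) : MinFinal (minoStep σ) i := by
  rw [minFinal_iff] at h ⊢
  rcases h with h | h
  · left
    have hleft : σ (i - 1) = σ (i - 1 + 1) := by rw [sub_add_cancel, h]
    rw [minoStep_of_eq_right hleft, minoStep_of_eq_left h, h]
  · right
    have hright : σ (i + 1 - 1) = σ (i + 1) := by rw [add_sub_cancel_right, h]
    rw [minoStep_of_eq_left hright, minoStep_of_eq_right h, h]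

end MinoStep

lemma ite_mod_two_add_one (s : ℕ) :
    ((if s % 2 = 1 then 1 else 0 : Fin 2) + 1) = if (s + 1) % 2 = 1 then 1 else 0 := by
  rcases Nat.mod_two_eq_zero_or_one s with hs | hs <;> simp [hs, Nat.add_mod]

theorem mino_final_flips_every_step_general (n : ℕ)
    (E : ℕ → ZMod n → Fin 2)
    (hE : ∀ t (i : ZMod n),
      E (t + 1) i = mino (E t (i - 1)) (E t i) (E t (i + 1)))
    (t : ℕ) (i : ZMod n) (h : MinFinal (E t) i) :
    ∀ s : ℕ, E (t + s) i = E t i + (if s % 2 = 1 then 1 else 0) := by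
  have hstep : ∀ s, E (t + (s + 1)) = minoStep (E (t + s)) := fun s => funext (hE (t + s))
  have hfinal : ∀ s, MinFinal (E (t + s)) i := by
    intro s
    induction s with
    | zero => exact h
    | succ s ih => rw [hstep]; exact ih.minoStep
  intro s
  induction s with
  | zero => simp
  | succ s ih => rw [hstep, (hfinal s).minoStep_apply, ih, add_assoc, ite_mod_two_add_one]

theorem mino_final_flips_every_step (n : ℕ) (hn : 5 ≤ n)
    (E : ℕ → ZMod n → Fin 2)
    (hE : ∀ t (i : ZMod n),
      E (t + 1) i = mino (E t (i - 1)) (E t i) (E t (i + 1)))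
    (t : ℕ) (i : ZMod n) (h : MinFinal (E t) i) :
    ∀ s : ℕ, E (t + s) i = E t i + (if s % 2 = 1 then 1 else 0) :=
  mino_final_flips_every_step_general n E hE t i h
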